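/- Let ϰ be an integer with ϰ ≥ 3, set q = e^{iπ/ϰ}, and let n be a natural number with n < ϰ. Define linear endomorphisms K, E, F of ℂ^{n+1} (with standard basis v₀, …, v_n) by K v_i = q^{n−2i} v_i, E v_i = [n−i+1] v_{i−1} (with E v₀ = 0), and F v_i = [i+1] v_{i+1} (with F v_n = 0), where [m] = (q^m − q^{−m})/(q − q^{−1}). Then the only ℂ-subspaces W ⊆ ℂ^{n+1} satisfying K(W) ⊆ W, E(W) ⊆ W and F(W) ⊆ W are W = 0 and W = ℂ^{n+1}. -/

import Mathlib

open Real

/-- The quantum integer `[m] = (q^m - q^{-m}) / (q - q⁻¹)`. -/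
noncomputable def qint (q : ℂ) (m : ℤ) : ℂ := (q ^ m - q ^ (-m)) / (q - q⁻¹)

/-- The standard basis vector `v_i` of `ℂ^{n+1}`. -/
noncomputable def stdVec (n : ℕ) (i : Fin (n + 1)) : Fin (n + 1) → ℂ := Pi.single i 1

/-!
`q` is a primitive `2ϰ`-th root of unity, so the quantum integers `[1], …, [ϰ - 1]` are nonzero,
and hence so is every coefficient of `E` and `F` on `V_n`. Applying `E` to a nonzero vector of `W`
moves its top nonzero coordinate down by one, so `v₀ ∈ W`; applying `F` to `v₀` then produces
every `v_i`.
-/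

open Complex in
theorem isPrimitiveRoot_exp_pi_mul_I_div {ϰ : ℕ} (h : ϰ ≠ 0) :
    IsPrimitiveRoot (exp (π * I / ϰ)) (2 * ϰ) := by
  convert isPrimitiveRoot_exp (2 * ϰ) (by omega) using 2
  push_cast
  field_simp

theorem IsPrimitiveRoot.zpow_sub_zpow_neg_ne_zero {K : Type*} [Field K] {q : K} {N : ℕ}
    (hq : IsPrimitiveRoot q (2 * N)) {m : ℤ} (h0 : 0 < m) (hm : m < N) :
    q ^ m - q ^ (-m) ≠ 0 := by
  intro h
  have hq0 : q ≠ 0 := hq.ne_zero (by omega)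
  have h2m : q ^ (2 * m) = 1 := by
    rw [two_mul, zpow_add₀ hq0, mul_eq_one_iff_eq_inv₀ (zpow_ne_zero m hq0), ← zpow_neg]
    exact sub_eq_zero.1 h
  have hdvd : (N : ℤ) ∣ m := by
    have := (hq.zpow_eq_one_iff_dvd _).1 h2m
    push_cast at this
    exact (mul_dvd_mul_iff_left two_ne_zero).1 this
  exact (Int.le_of_dvd h0 hdvd).not_gt hm

theorem qint_ne_zero {q : ℂ} {N : ℕ} (hq : IsPrimitiveRoot q (2 * N)) {m : ℤ} (h0 : 0 < m)
    (hm : m < N) : qint q m ≠ 0 := by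
  refine div_ne_zero (hq.zpow_sub_zpow_neg_ne_zero h0 hm) ?_
  simpa using hq.zpow_sub_zpow_neg_ne_zero one_pos (by omega)

namespace WeylModule

variable {n : ℕ} {c : Fin n → ℂ} {E F : (Fin (n + 1) → ℂ) →ₗ[ℂ] (Fin (n + 1) → ℂ)}
  {W : Submodule ℂ (Fin (n + 1) → ℂ)}

theorem eq_sum_smul_stdVec (x : Fin (n + 1) → ℂ) : x = ∑ i, x i • stdVec n i := by
  ext j
  simp [stdVec, Pi.single_apply]

theorem apply_eq_sum_of_lowering (hE0 : E (stdVec n 0) = 0)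
    (hE : ∀ i : Fin n, E (stdVec n i.succ) = c i • stdVec n i.castSucc) (x : Fin (n + 1) → ℂ) :
    E x = ∑ i : Fin n, (c i * x i.succ) • stdVec n i.castSucc := by
  conv_lhs => rw [eq_sum_smul_stdVec x]
  simp [Fin.sum_univ_succ, hE0, hE, smul_smul, mul_comm]

theorem apply_castSucc_of_lowering (hE0 : E (stdVec n 0) = 0)
    (hE : ∀ i : Fin n, E (stdVec n i.succ) = c i • stdVec n i.castSucc) (x : Fin (n + 1) → ℂ)
    (i : Fin n) : E x i.castSucc = c i * x i.succ := by
  simp [apply_eq_sum_of_lowering hE0 hE, stdVec, Pi.single_apply]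

theorem apply_last_of_lowering (hE0 : E (stdVec n 0) = 0)
    (hE : ∀ i : Fin n, E (stdVec n i.succ) = c i • stdVec n i.castSucc) (x : Fin (n + 1) → ℂ) :
    E x (Fin.last n) = 0 := by
  simp [apply_eq_sum_of_lowering hE0 hE, stdVec, Fin.castSucc_ne_last]

theorem eq_smul_stdVec_zero {x : Fin (n + 1) → ℂ} (hx : ∀ k : Fin (n + 1), 0 < (k : ℕ) → x k = 0) :
    x = x 0 • stdVec n 0 := by
  ext k
  rcases Fin.eq_zero_or_eq_succ k with rfl | ⟨j, rfl⟩
  · simp [stdVec]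
  · simp [stdVec, hx]

theorem apply_eq_zero_of_lowering (hE0 : E (stdVec n 0) = 0)
    (hE : ∀ i : Fin n, E (stdVec n i.succ) = c i • stdVec n i.castSucc) {m : ℕ}
    {x : Fin (n + 1) → ℂ} (hx : ∀ k : Fin (n + 1), m + 1 < (k : ℕ) → x k = 0)
    (k : Fin (n + 1)) (hk : m < (k : ℕ)) : E x k = 0 := by
  induction k using Fin.lastCases with
  | last => exact apply_last_of_lowering hE0 hE x
  | cast j =>
    rw [apply_castSucc_of_lowering hE0 hE, hx j.succ (by simpa using hk), mul_zero]

theorem stdVec_zero_mem_of_lowering (hc : ∀ i, c i ≠ 0) (hE0 : E (stdVec n 0) = 0)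
    (hE : ∀ i : Fin n, E (stdVec n i.succ) = c i • stdVec n i.castSucc)
    (hEW : ∀ x ∈ W, E x ∈ W) (hW : W ≠ ⊥) : stdVec n 0 ∈ W := by
  -- induction on an upper bound `m` for the index of the top nonzero coordinate
  suffices ∀ m : ℕ, ∀ x ∈ W, x ≠ 0 → (∀ k : Fin (n + 1), m < (k : ℕ) → x k = 0) →
      stdVec n 0 ∈ W by
    obtain ⟨x, hxW, hx⟩ := Submodule.exists_mem_ne_zero_of_ne_bot hW
    exact this n x hxW hx fun k hk => absurd k.is_lt (by omega)
  intro m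
  induction m with
  | zero =>
    intro x hxW hx hsupp
    have hx0 : x 0 ≠ 0 := fun h => hx (by rw [eq_smul_stdVec_zero hsupp, h, zero_smul])
    rwa [eq_smul_stdVec_zero hsupp, W.smul_mem_iff hx0] at hxW
  | succ m ih =>
    intro x hxW hx hsupp
    by_cases hsupp' : ∀ k : Fin (n + 1), m < (k : ℕ) → x k = 0
    · exact ih x hxW hx hsupp'
    obtain ⟨k, hmk, hxk⟩ := not_forall₂.1 hsupp'
    obtain ⟨j, rfl⟩ := Fin.exists_succ_eq.2 (show k ≠ 0 by rintro rfl; simp at hmk)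
    have hEx : E x j.castSucc ≠ 0 := by
      rw [apply_castSucc_of_lowering hE0 hE]
      exact mul_ne_zero (hc j) hxk
    exact ih (E x) (hEW x hxW) (fun h => hEx (congrFun h _))
      (apply_eq_zero_of_lowering hE0 hE hsupp)

theorem eq_top_of_raising (hc : ∀ i, c i ≠ 0)
    (hF : ∀ i : Fin n, F (stdVec n i.castSucc) = c i • stdVec n i.succ)
    (hFW : ∀ x ∈ W, F x ∈ W) (h0 : stdVec n 0 ∈ W) : W = ⊤ := by
  have hmem : ∀ i, stdVec n i ∈ W := by
    intro i
    induction i using Fin.induction with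
    | zero => exact h0
    | succ i ih => exact (W.smul_mem_iff (hc i)).1 (hF i ▸ hFW _ ih)
  rw [eq_top_iff, ← (Pi.basisFun ℂ (Fin (n + 1))).span_eq, Submodule.span_le]
  rintro _ ⟨i, rfl⟩
  simpa [stdVec] using hmem i

end WeylModule

open WeylModule in
theorem weyl_module_irreducible_general (ϰ : ℕ) (q : ℂ)
    (hq : q = Complex.exp (Real.pi * Complex.I / ϰ)) (n : ℕ) (hn : n < ϰ)
    (E F : (Fin (n + 1) → ℂ) →ₗ[ℂ] (Fin (n + 1) → ℂ))
    (hE0 : E (stdVec n 0) = 0)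
    (hE : ∀ i : Fin n, E (stdVec n i.succ) =
      qint q ((n : ℤ) - ((i.succ : Fin (n + 1)) : ℕ) + 1) • stdVec n i.castSucc)
    (hF : ∀ i : Fin n, F (stdVec n i.castSucc) =
      qint q (((i : ℕ) : ℤ) + 1) • stdVec n i.succ)
    (W : Submodule ℂ (Fin (n + 1) → ℂ))
    (hEW : ∀ x ∈ W, E x ∈ W) (hFW : ∀ x ∈ W, F x ∈ W) :
    W = ⊥ ∨ W = ⊤ := by
  have hq' : IsPrimitiveRoot q (2 * ϰ) := hq ▸ isPrimitiveRoot_exp_pi_mul_I_div (by omega)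
  have hcE : ∀ i : Fin n, qint q ((n : ℤ) - ((i.succ : Fin (n + 1)) : ℕ) + 1) ≠ 0 := fun i =>
    qint_ne_zero hq' (by simp only [Fin.val_succ]; omega) (by simp only [Fin.val_succ]; omega)
  have hcF : ∀ i : Fin n, qint q (((i : ℕ) : ℤ) + 1) ≠ 0 := fun i =>
    qint_ne_zero hq' (by omega) (by omega)
  refine or_iff_not_imp_left.2 fun hW => ?_
  exact eq_top_of_raising hcF hF hFW (stdVec_zero_mem_of_lowering hcE hE0 hE hEW hW)

/-- For `q = e^{iπ/ϰ}` with `ϰ ≥ 3` and `n < ϰ`, the Weyl module `V_n` of `U_q(sl₂)`,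
given by `K v_i = q^{n-2i} v_i`, `E v_i = [n-i+1] v_{i-1}` (with `E v₀ = 0`) and
`F v_i = [i+1] v_{i+1}` (with `F v_n = 0`), is irreducible: its only invariant
subspaces are `0` and `ℂ^{n+1}`. -/
theorem weyl_module_irreducible (ϰ : ℕ) (hϰ : 3 ≤ ϰ) (q : ℂ)
    (hq : q = Complex.exp (Real.pi * Complex.I / ϰ)) (n : ℕ) (hn : n < ϰ)
    (K E F : (Fin (n + 1) → ℂ) →ₗ[ℂ] (Fin (n + 1) → ℂ))
    (hK : ∀ i : Fin (n + 1), K (stdVec n i) = q ^ ((n : ℤ) - 2 * (i : ℕ)) • stdVec n i)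
    (hE0 : E (stdVec n 0) = 0)
    (hE : ∀ i : Fin n, E (stdVec n i.succ) =
      qint q ((n : ℤ) - ((i.succ : Fin (n + 1)) : ℕ) + 1) • stdVec n i.castSucc)
    (hFn : F (stdVec n (Fin.last n)) = 0)
    (hF : ∀ i : Fin n, F (stdVec n i.castSucc) =
      qint q (((i : ℕ) : ℤ) + 1) • stdVec n i.succ)
    (W : Submodule ℂ (Fin (n + 1) → ℂ))
    (hKW : ∀ x ∈ W, K x ∈ W) (hEW : ∀ x ∈ W, E x ∈ W) (hFW : ∀ x ∈ W, F x ∈ W) :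
    W = ⊥ ∨ W = ⊤ :=
  weyl_module_irreducible_general ϰ q hq n hn E F hE0 hE hF W hEW hFW
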